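/- For every ε > 0 there exists N such that for all n ≥ N there exists a nonzero function f : F_2^n → ℝ supported in the Hamming ball B_2(0,n) of radius 2 with ⟨Af, f⟩ ≥ (√3 − ε) · √n · ⟨f, f⟩; in particular λ_{B_2(0,n)} ≥ (√3 − ε) √n. -/
import Mathlib


open Finset

/-- The adjacency operator of the Hamming cube: `(Af)(x) = Σ_{y : d_H(x,y) = 1} f(y)`. -/
noncomputable def adjOp {n : ℕ} (f : (Fin n → ZMod 2) → ℝ) : (Fin n → ZMod 2) → ℝ :=
  fun x => ∑ y : Fin n → ZMod 2, if hammingDist x y = 1 then f y else 0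

/-- The inner product `⟨f, g⟩ = Σ_x f(x) g(x)`. -/
noncomputable def innerCube {n : ℕ} (f g : (Fin n → ZMod 2) → ℝ) : ℝ :=
  ∑ x : Fin n → ZMod 2, f x * g x

/-- The maximal eigenvalue of the subgraph of the Hamming cube induced by `B`. -/
noncomputable def maxEig {n : ℕ} (B : Finset (Fin n → ZMod 2)) : ℝ :=
  sSup {r : ℝ | ∃ f : (Fin n → ZMod 2) → ℝ, f ≠ 0 ∧ (∀ x, f x ≠ 0 → x ∈ B) ∧
    r = innerCube (adjOp f) f / innerCube f f}

/-- The Hamming ball of radius `r` centered at `0` in `F_2^n`. -/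
def hammingBall (n r : ℕ) : Finset (Fin n → ZMod 2) :=
  Finset.univ.filter (fun x => hammingNorm x ≤ r)

section Aux

variable {n : ℕ}

/-- Flip the `i`-th coordinate. -/
def eflip (x : Fin n → ZMod 2) (i : Fin n) : Fin n → ZMod 2 :=
  Function.update x i (x i + 1)

lemma zmod2_ne_iff {a b : ZMod 2} : a ≠ b ↔ b = a + 1 := by revert a b; decide

lemma zmod2_add_one_ne (a : ZMod 2) : a ≠ a + 1 := by revert a; decide

lemma zmod2_cases (a : ZMod 2) : a = 0 ∨ a = 1 := by revert a; decide

lemma eflip_involutive (i : Fin n) (x : Fin n → ZMod 2) :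
    eflip (eflip x i) i = x := by
  funext j
  by_cases h : j = i
  · subst h
    simp only [eflip, Function.update_self]
    have : ∀ a : ZMod 2, a + 1 + 1 = a := by decide
    exact this _
  · simp [eflip, Function.update_of_ne h]

lemma eflip_mem_filter (x : Fin n → ZMod 2) (i : Fin n) :
    (Finset.univ.filter fun j => x j ≠ eflip x i j) = {i} := by
  ext j
  simp only [Finset.mem_filter, Finset.mem_univ, true_and, Finset.mem_singleton]
  constructor
  · intro h
    by_contra hj
    exact h (by simp [eflip, Function.update_of_ne hj])
  · rintro rfl
    simp only [eflip, Function.update_self]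
    exact zmod2_add_one_ne _

lemma hammingDist_eq_one_iff {x y : Fin n → ZMod 2} :
    hammingDist x y = 1 ↔ ∃ i, y = eflip x i := by
  constructor
  · intro h
    rw [hammingDist, Finset.card_eq_one] at h
    obtain ⟨i, hi⟩ := h
    refine ⟨i, funext fun j => ?_⟩
    by_cases hj : j = i
    · subst hj
      have hmem : j ∈ (Finset.univ.filter fun k => x k ≠ y k) := by
        rw [hi]; exact Finset.mem_singleton_self j
      simp only [Finset.mem_filter, Finset.mem_univ, true_and] at hmem
      have := zmod2_ne_iff.mp hmem
      simp [eflip, this]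
    · have hnm : j ∉ (Finset.univ.filter fun k => x k ≠ y k) := by
        rw [hi]; simpa using hj
      simp only [Finset.mem_filter, Finset.mem_univ, true_and, not_not] at hnm
      simp [eflip, Function.update_of_ne hj, hnm.symm]
  · rintro ⟨i, rfl⟩
    rw [hammingDist]
    rw [show (Finset.univ.filter fun j => x j ≠ eflip x i j) = {i} from eflip_mem_filter x i]
    simp

lemma eflip_injective (x : Fin n → ZMod 2) : Function.Injective (eflip x) := by
  intro i j h
  by_contra hij
  have h1 : eflip x i i = x i + 1 := by simp [eflip]
  have h2 : eflip x j i = x i := by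
    simp only [eflip]; exact Function.update_of_ne hij _ _
  rw [h] at h1
  rw [h1] at h2
  exact zmod2_add_one_ne _ h2.symm

lemma adjOp_apply (f : (Fin n → ZMod 2) → ℝ) (x : Fin n → ZMod 2) :
    adjOp f x = ∑ i : Fin n, f (eflip x i) := by
  rw [adjOp]
  rw [← Finset.sum_filter]
  have himg : (Finset.univ.filter fun y => hammingDist x y = 1)
      = Finset.image (eflip x) Finset.univ := by
    ext y
    simp only [Finset.mem_filter, Finset.mem_univ, true_and, Finset.mem_image]
    rw [hammingDist_eq_one_iff]
    constructor
    · rintro ⟨i, rfl⟩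
      exact ⟨i, rfl⟩
    · rintro ⟨i, rfl⟩
      exact ⟨i, rfl⟩
  rw [himg, Finset.sum_image (fun i _ j _ h => eflip_injective x h)]

lemma hammingNorm_eq_card (x : Fin n → ZMod 2) :
    hammingNorm x = (Finset.univ.filter fun i => x i = 1).card := by
  rw [hammingNorm]
  congr 1
  ext i
  simp only [Finset.mem_filter, Finset.mem_univ, true_and]
  rcases zmod2_cases (x i) with h | h <;> simp [h]

lemma card_filter_zero (x : Fin n → ZMod 2) :
    (Finset.univ.filter fun i => ¬ x i = 1).card = n - hammingNorm x := by
  have := Finset.card_filter_add_card_filter_not (s := (Finset.univ : Finset (Fin n)))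
    (p := fun i => x i = 1)
  rw [Finset.card_univ, Fintype.card_fin] at this
  rw [hammingNorm_eq_card]
  omega

lemma hammingNorm_eflip_one {x : Fin n → ZMod 2} {i : Fin n} (h : x i = 1) :
    hammingNorm (eflip x i) = hammingNorm x - 1 := by
  rw [hammingNorm_eq_card, hammingNorm_eq_card]
  have : (Finset.univ.filter fun j => eflip x i j = 1)
      = (Finset.univ.filter fun j => x j = 1).erase i := by
    ext j
    simp only [Finset.mem_filter, Finset.mem_univ, true_and, Finset.mem_erase]
    by_cases hj : j = i
    · subst hj
      simp only [eflip, Function.update_self, h, ne_eq, not_true_eq_false, false_and,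
        iff_false]
      decide
    · simp [eflip, Function.update_of_ne hj, hj]
  rw [this, Finset.card_erase_of_mem (by simp [h])]

lemma hammingNorm_eflip_zero {x : Fin n → ZMod 2} {i : Fin n} (h : ¬ x i = 1) :
    hammingNorm (eflip x i) = hammingNorm x + 1 := by
  have h0 : x i = 0 := by rcases zmod2_cases (x i) with h' | h'; exact h'; exact absurd h' h
  rw [hammingNorm_eq_card, hammingNorm_eq_card]
  have : (Finset.univ.filter fun j => eflip x i j = 1)
      = insert i (Finset.univ.filter fun j => x j = 1) := by
    ext j
    simp only [Finset.mem_filter, Finset.mem_univ, true_and, Finset.mem_insert]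
    by_cases hj : j = i
    · subst hj
      simp [eflip, h0]
    · simp [eflip, Function.update_of_ne hj, hj]
  rw [this, Finset.card_insert_of_notMem (by simp [h0])]

/-- The radial profile of the near-eigenfunction. -/
noncomputable def gfun (n : ℕ) : ℕ → ℝ
  | 0 => n
  | 1 => Real.sqrt (3 * n - 2)
  | 2 => 2
  | _ + 3 => 0

lemma gfun_eq_zero (n : ℕ) {k : ℕ} (hk : 3 ≤ k) : gfun n k = 0 := by
  match k, hk with
  | (m + 3), _ => rfl

/-- The sum of `gfun` values over the neighbours of `x`. -/
lemma sum_gfun (x : Fin n → ZMod 2) :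
    ∑ i : Fin n, gfun n (hammingNorm (eflip x i))
      = (hammingNorm x : ℝ) * gfun n (hammingNorm x - 1)
        + ((n : ℝ) - hammingNorm x) * gfun n (hammingNorm x + 1) := by
  rw [← Finset.sum_filter_add_sum_filter_not Finset.univ (fun i => x i = 1)]
  have h1 : ∑ i ∈ Finset.univ.filter (fun i => x i = 1),
      gfun n (hammingNorm (eflip x i))
      = (hammingNorm x : ℝ) * gfun n (hammingNorm x - 1) := by
    rw [Finset.sum_congr rfl (fun i hi => by
      rw [hammingNorm_eflip_one (Finset.mem_filter.mp hi).2])]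
    rw [Finset.sum_const, ← hammingNorm_eq_card, nsmul_eq_mul]
  have h2 : ∑ i ∈ Finset.univ.filter (fun i => ¬ x i = 1),
      gfun n (hammingNorm (eflip x i))
      = ((n : ℝ) - hammingNorm x) * gfun n (hammingNorm x + 1) := by
    rw [Finset.sum_congr rfl (fun i hi => by
      rw [hammingNorm_eflip_zero (Finset.mem_filter.mp hi).2])]
    rw [Finset.sum_const, card_filter_zero, nsmul_eq_mul]
    have : hammingNorm x ≤ n := by
      rw [hammingNorm_eq_card]
      exact (Finset.card_filter_le _ _).trans (by simp)
    push_cast [Nat.cast_sub this]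
    ring
  rw [h1, h2]

lemma key_lemma (n : ℕ) (hn : (2:ℝ) ≤ n) (w : ℕ) :
    ((w : ℝ) * gfun n (w - 1) + ((n : ℝ) - w) * gfun n (w + 1)) * gfun n w
      = Real.sqrt (3 * n - 2) * (gfun n w * gfun n w) := by
  set lam : ℝ := Real.sqrt (3 * n - 2) with hlam
  have h3n2 : (0 : ℝ) ≤ 3 * n - 2 := by linarith
  have hlamsq : lam * lam = 3 * n - 2 := Real.mul_self_sqrt h3n2
  match w with
  | 0 =>
    show ((0:ℕ) * gfun n (0-1) + ((n:ℝ) - (0:ℕ)) * gfun n 1) * gfun n 0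
      = lam * (gfun n 0 * gfun n 0)
    simp only [gfun, Nat.cast_zero]
    ring
  | 1 =>
    show ((1:ℕ) * gfun n 0 + ((n:ℝ) - (1:ℕ)) * gfun n 2) * gfun n 1
      = lam * (gfun n 1 * gfun n 1)
    simp only [gfun, Nat.cast_one]
    rw [← hlam, hlamsq]
    ring
  | 2 =>
    show ((2:ℕ) * gfun n 1 + ((n:ℝ) - (2:ℕ)) * gfun n 3) * gfun n 2
      = lam * (gfun n 2 * gfun n 2)
    simp only [gfun, Nat.cast_ofNat]
    rw [← hlam]
    ring
  | (m + 3) =>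
    rw [gfun_eq_zero n (by omega : 3 ≤ m + 3)]
    ring

end Aux

theorem eig_ball_two :
    ∀ ε : ℝ, 0 < ε → ∃ N : ℕ, ∀ n : ℕ, N ≤ n →
      (∃ f : (Fin n → ZMod 2) → ℝ, f ≠ 0 ∧ (∀ x, f x ≠ 0 → hammingNorm x ≤ 2) ∧
        innerCube (adjOp f) f ≥ (Real.sqrt 3 - ε) * Real.sqrt n * innerCube f f) ∧
      maxEig (hammingBall n 2) ≥ (Real.sqrt 3 - ε) * Real.sqrt n := by
  intro ε hε
  refine ⟨max 2 ⌈2 / ε ^ 2⌉₊, fun n hn => ?_⟩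
  have hn2 : 2 ≤ n := le_trans (le_max_left _ _) hn
  have hnR : (2 : ℝ) ≤ n := by exact_mod_cast hn2
  set lam : ℝ := Real.sqrt (3 * n - 2) with hlam
  have h3n2 : (0 : ℝ) ≤ 3 * n - 2 := by linarith
  have hlamsq : lam * lam = 3 * n - 2 := Real.mul_self_sqrt h3n2
  have hlam_nonneg : 0 ≤ lam := Real.sqrt_nonneg _
  -- the near-eigenfunction
  set f : (Fin n → ZMod 2) → ℝ := fun x => gfun n (hammingNorm x) with hf
  -- pointwise eigen relation
  have key : ∀ x : Fin n → ZMod 2, adjOp f x * f x = lam * (f x * f x) := by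
    intro x
    rw [hf]
    simp only
    rw [adjOp_apply, sum_gfun]
    exact key_lemma n hnR (hammingNorm x)
  -- inner products
  have hinner : innerCube (adjOp f) f = lam * innerCube f f := by
    rw [innerCube, innerCube, Finset.mul_sum]
    exact Finset.sum_congr rfl fun x _ => key x
  have hf0 : f 0 = n := by
    rw [hf]
    simp only [hammingNorm_zero]
    rfl
  have hfne : f ≠ 0 := by
    intro h
    have : f 0 = 0 := by rw [h]; rfl
    rw [hf0] at this
    have hne : (n : ℝ) ≠ 0 := Nat.cast_ne_zero.mpr (by omega)
    exact hne this
  have hsupp : ∀ x, f x ≠ 0 → hammingNorm x ≤ 2 := by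
    intro x hx
    by_contra h
    exact hx (gfun_eq_zero n (by omega))
  have hffpos : 0 < innerCube f f := by
    rw [innerCube]
    have h1 : f 0 * f 0 ≤ ∑ x : Fin n → ZMod 2, f x * f x :=
      Finset.single_le_sum (f := fun x => f x * f x)
        (fun x _ => mul_self_nonneg (f x)) (Finset.mem_univ (0 : Fin n → ZMod 2))
    have hnp : (0 : ℝ) < f 0 * f 0 := by
      rw [hf0]
      have : (0:ℝ) < n := by linarith
      positivity
    linarith
  -- the sqrt inequality
  have hsqrt : (Real.sqrt 3 - ε) * Real.sqrt n ≤ lam := by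
    have hceil : (⌈2 / ε ^ 2⌉₊ : ℝ) ≤ n := by
      exact_mod_cast le_trans (le_max_right _ _) hn
    have h2eps : 2 / ε ^ 2 ≤ n := le_trans (Nat.le_ceil _) hceil
    have heps2n : 2 ≤ ε ^ 2 * n := by
      rw [div_le_iff₀ (by positivity)] at h2eps
      linarith
    have hsq2 : Real.sqrt 2 ≤ ε * Real.sqrt n := by
      rw [show ε * Real.sqrt n = Real.sqrt (ε ^ 2 * n) by
        rw [Real.sqrt_mul (by positivity), Real.sqrt_sq hε.le]]
      exact Real.sqrt_le_sqrt heps2n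
    have h2' : Real.sqrt 2 * Real.sqrt 2 = 2 := Real.mul_self_sqrt (by norm_num)
    have key2 : (3:ℝ) * n ≤ (lam + Real.sqrt 2) ^ 2 := by
      nlinarith [hlamsq, hlam_nonneg, Real.sqrt_nonneg (2:ℝ)]
    have hsub : Real.sqrt (3 * n) ≤ lam + Real.sqrt 2 := by
      calc Real.sqrt (3 * n) ≤ Real.sqrt ((lam + Real.sqrt 2) ^ 2) :=
            Real.sqrt_le_sqrt key2
        _ = lam + Real.sqrt 2 := Real.sqrt_sq (by positivity)
    have h3n : Real.sqrt 3 * Real.sqrt n = Real.sqrt (3 * n) := by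
      rw [Real.sqrt_mul (by norm_num)]
    have hexp : (Real.sqrt 3 - ε) * Real.sqrt n
        = Real.sqrt 3 * Real.sqrt n - ε * Real.sqrt n := by ring
    rw [hexp, h3n]
    linarith
  have hmain : innerCube (adjOp f) f ≥ (Real.sqrt 3 - ε) * Real.sqrt n * innerCube f f := by
    rw [hinner]
    exact mul_le_mul_of_nonneg_right hsqrt hffpos.le
  refine ⟨⟨f, hfne, hsupp, hmain⟩, ?_⟩
  -- maxEig bound
  have hbdd : BddAbove {r : ℝ | ∃ g : (Fin n → ZMod 2) → ℝ, g ≠ 0 ∧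
      (∀ x, g x ≠ 0 → x ∈ hammingBall n 2) ∧
      r = innerCube (adjOp g) g / innerCube g g} := by
    refine ⟨n, fun r hr => ?_⟩
    obtain ⟨g, hg, -, rfl⟩ := hr
    have hggpos : 0 < innerCube g g := by
      rw [innerCube]
      obtain ⟨x0, hx0⟩ : ∃ x, g x ≠ 0 := by
        by_contra h
        push_neg at h
        exact hg (funext fun x => h x)
      have h1 : g x0 * g x0 ≤ ∑ x : Fin n → ZMod 2, g x * g x :=
        Finset.single_le_sum (f := fun x => g x * g x)
          (fun x _ => mul_self_nonneg (g x)) (Finset.mem_univ x0)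
      have h2 : (0:ℝ) < g x0 * g x0 := mul_self_pos.mpr hx0
      linarith
    rw [div_le_iff₀ hggpos]
    -- ⟨Ag, g⟩ ≤ n ⟨g, g⟩
    have step1 : innerCube (adjOp g) g
        = ∑ x : Fin n → ZMod 2, ∑ i : Fin n, g (eflip x i) * g x := by
      rw [innerCube]
      exact Finset.sum_congr rfl fun x _ => by rw [adjOp_apply, Finset.sum_mul]
    have step2 : ∀ (x : Fin n → ZMod 2) (i : Fin n),
        g (eflip x i) * g x ≤ (g (eflip x i) * g (eflip x i) + g x * g x) / 2 := by
      intro x i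
      nlinarith [sq_nonneg (g (eflip x i) - g x)]
    have hflipsum : ∀ i : Fin n, ∑ x : Fin n → ZMod 2, g (eflip x i) * g (eflip x i)
        = ∑ x : Fin n → ZMod 2, g x * g x := by
      intro i
      exact Fintype.sum_bijective (fun x => eflip x i)
        (Function.Involutive.bijective (fun x => eflip_involutive i x))
        _ _ (fun x => rfl)
    calc innerCube (adjOp g) g
        ≤ ∑ x : Fin n → ZMod 2, ∑ i : Fin n,
            (g (eflip x i) * g (eflip x i) + g x * g x) / 2 := by
          rw [step1]
          exact Finset.sum_le_sum fun x _ => Finset.sum_le_sum fun i _ => step2 x i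
      _ = (n : ℝ) * innerCube g g := by
          rw [innerCube]
          rw [Finset.sum_comm]
          have : ∀ i : Fin n, ∑ x : Fin n → ZMod 2,
              (g (eflip x i) * g (eflip x i) + g x * g x) / 2
              = ∑ x : Fin n → ZMod 2, g x * g x := by
            intro i
            rw [show (fun x => (g (eflip x i) * g (eflip x i) + g x * g x) / 2) = fun x =>
              (g (eflip x i) * g (eflip x i) + g x * g x) / 2 from rfl]
            rw [← Finset.sum_div]
            rw [Finset.sum_add_distrib, hflipsum i]
            ring
          rw [Finset.sum_congr rfl fun i _ => this i, Finset.sum_const, nsmul_eq_mul]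
          simp
  have hmem : lam ∈ {r : ℝ | ∃ g : (Fin n → ZMod 2) → ℝ, g ≠ 0 ∧
      (∀ x, g x ≠ 0 → x ∈ hammingBall n 2) ∧
      r = innerCube (adjOp g) g / innerCube g g} := by
    refine ⟨f, hfne, fun x hx => ?_, ?_⟩
    · rw [hammingBall, Finset.mem_filter]
      exact ⟨Finset.mem_univ x, hsupp x hx⟩
    · rw [hinner, mul_div_assoc, div_self hffpos.ne', mul_one]
  calc (Real.sqrt 3 - ε) * Real.sqrt n ≤ lam := hsqrt
    _ ≤ maxEig (hammingBall n 2) := le_csSup hbdd hmem
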